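/- arXiv:2601.12041 — 9 statements merged into one kernel-verified Lean document; each statement's English description precedes it below -/
import Mathlib

section
/- If ρ: F → [Λ]^ω is a partition regular function (i.e., F is a nonempty family of infinite subsets of Ω closed under removing finite sets, and ρ is monotone, Ramsey-partition regular, and sparse), then the family I_ρ = {A ⊆ Λ : for all F ∈ F, ρ(F) ⊄ A} is an ideal on Λ (contains all finite sets, is closed under subsets and finite unions, contains ∅ and not Λ). -/
open Set Filter

/-- An ideal on a set `X`: contains `∅` and all finite sets, does not contain `X`,
and is closed under subsets and finite unions. -/
def IsIdeal {X : Type*} (I : Set (Set X)) : Prop :=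
  ∅ ∈ I ∧ (Set.univ : Set X) ∉ I ∧ (∀ A : Set X, A.Finite → A ∈ I) ∧
    (∀ A B : Set X, A ⊆ B → B ∈ I → A ∈ I) ∧
    (∀ A B : Set X, A ∈ I → B ∈ I → A ∪ B ∈ I)

/-- A partition regular function `ρ : 𝓕 → [Λ]^ω` (modelled as a total function
`ρ : Set Ω → Set Λ` whose relevant values are those on `𝓕`). `𝓕` is a nonempty family
of infinite subsets of `Ω` closed under removing finite sets; `ρ` takes infinite values on `𝓕`,
is monotone (M), Ramsey partition regular (R) and sparse (S). -/
structure IsPartReg {Ω Λ : Type*} (𝓕 : Set (Set Ω)) (ρ : Set Ω → Set Λ) : Prop where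
  nonempty : 𝓕.Nonempty
  infinite : ∀ F ∈ 𝓕, F.Infinite
  diff_mem : ∀ F ∈ 𝓕, ∀ K : Set Ω, K.Finite → F \ K ∈ 𝓕
  rho_infinite : ∀ F ∈ 𝓕, (ρ F).Infinite
  mono : ∀ E ∈ 𝓕, ∀ F ∈ 𝓕, E ⊆ F → ρ E ⊆ ρ F
  ramsey : ∀ F ∈ 𝓕, ∀ A B : Set Λ, ρ F = A ∪ B → ∃ E ∈ 𝓕, ρ E ⊆ A ∨ ρ E ⊆ B
  sparse : ∀ E ∈ 𝓕, ∃ F ∈ 𝓕, F ⊆ E ∧ ∀ a ∈ ρ F, ∃ K : Set Ω, K.Finite ∧ a ∉ ρ (F \ K)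

/-- The ideal `I_ρ = {A ⊆ Λ : ∀ F ∈ 𝓕, ρ(F) ⊄ A}` associated to `ρ`. -/
def idealOf {Ω Λ : Type*} (𝓕 : Set (Set Ω)) (ρ : Set Ω → Set Λ) : Set (Set Λ) :=
  {A | ∀ F ∈ 𝓕, ¬ ρ F ⊆ A}

/-- if `ρ` is a partition regular function on countably infinite sets
`Ω`, `Λ`, then `I_ρ` is an ideal on `Λ`. -/
theorem stmt_0 {Ω Λ : Type*} [Countable Ω] [Infinite Ω] [Countable Λ] [Infinite Λ]
    (𝓕 : Set (Set Ω)) (ρ : Set Ω → Set Λ) (h : IsPartReg 𝓕 ρ) :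
    IsIdeal (idealOf 𝓕 ρ) := by
  refine ⟨?_, ?_, ?_, ?_, ?_⟩
  · intro F hF hsub
    exact ((h.rho_infinite F hF).nonempty.mono hsub).ne_empty rfl
  · intro hbad
    obtain ⟨F, hF⟩ := h.nonempty
    exact hbad F hF (subset_univ _)
  · intro A hA F hF hsub
    exact h.rho_infinite F hF ((hA.subset hsub))
  · intro A B hAB hB F hF hsub
    exact hB F hF (hsub.trans hAB)
  · intro A B hA hB F hF hsub
    have : ρ F = (ρ F ∩ A) ∪ (ρ F ∩ B) := by
      rw [← inter_union_distrib_left]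
      exact (inter_eq_left.mpr hsub).symm
    obtain ⟨E, hE, hcase⟩ := h.ramsey F hF _ _ this
    rcases hcase with hc | hc
    · exact hA E hE (hc.trans inter_subset_right)
    · exact hB E hE (hc.trans inter_subset_right)
end

section
/- If a partition regular function ρ satisfies property (S₂), then it satisfies property (S₁). -/
open Set Filter

/-- Property `(S₂)` of a partition regular function. -/
def S2Prop {Ω Λ : Type*} (𝓕 : Set (Set Ω)) (ρ : Set Ω → Set Λ) : Prop :=
  ∀ E ∈ 𝓕, ∃ F ∈ 𝓕, F ⊆ E ∧ ∀ B : Set Λ, B ∉ idealOf 𝓕 ρ → B ⊆ ρ F →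
    ∃ G ∈ 𝓕, ρ G ⊆ B ∧
      ∀ K : Set Ω, K.Finite → ∃ L : Set Ω, L.Finite ∧ ρ (G \ L) ⊆ ρ (F \ K)

/-- Property `(S₁)` of a partition regular function. -/
def S1Prop {Ω Λ : Type*} (𝓕 : Set (Set Ω)) (ρ : Set Ω → Set Λ) : Prop :=
  ∀ E ∈ 𝓕, ∃ F ∈ 𝓕, F ⊆ E ∧ ∀ A ∈ idealOf 𝓕 ρ,
    ∃ G ∈ 𝓕, ρ G ⊆ ρ F \ A ∧
      ∀ K : Set Ω, K.Finite → ∃ L : Set Ω, L.Finite ∧ ρ (G \ L) ⊆ ρ (F \ K)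

/-- if a partition regular function satisfies `(S₂)` then it satisfies `(S₁)`. -/
theorem stmt_6 {Ω Λ : Type*} (𝓕 : Set (Set Ω)) (ρ : Set Ω → Set Λ)
    (h : IsPartReg 𝓕 ρ) (h2 : S2Prop 𝓕 ρ) : S1Prop 𝓕 ρ := by
  intro E hE
  obtain ⟨F, hF, hFE, hS2⟩ := h2 E hE
  refine ⟨F, hF, hFE, ?_⟩
  intro A hA
  have hB : (ρ F \ A) ∉ idealOf 𝓕 ρ := by
    have hsplit : ρ F = (ρ F \ A) ∪ (ρ F ∩ A) := by
      ext x; by_cases hx : x ∈ A <;> simp [hx]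
    obtain ⟨E', hE', hcase⟩ := h.ramsey F hF _ _ hsplit
    intro hcontra
    rcases hcase with hc | hc
    · exact hcontra E' hE' hc
    · exact hA E' hE' (hc.trans (Set.inter_subset_right))
  obtain ⟨G, hG, hGB, hL⟩ := hS2 (ρ F \ A) hB Set.diff_subset
  exact ⟨G, hG, hGB, hL⟩
end

section
/- If a partition regular function ρ satisfies P⁻ and has small accretions, then ρ satisfies property (S₂). -/
open Set Filter

/-- Property `P⁻` of a partition regular function. -/
def PminusProp {Ω Λ : Type*} (𝓕 : Set (Set Ω)) (ρ : Set Ω → Set Λ) : Prop :=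
  ∀ A : ℕ → Set Λ, (∀ n, A (n + 1) ⊆ A n) → A 0 ∉ idealOf 𝓕 ρ →
    (∀ n, A n \ A (n + 1) ∈ idealOf 𝓕 ρ) →
    ∃ F ∈ 𝓕, ρ F ⊆ A 0 ∧ ∀ n, ∃ K : Set Ω, K.Finite ∧ ρ (F \ K) ⊆ A n

/-- `ρ` has small accretions. -/
def HasSmallAccretions {Ω Λ : Type*} (𝓕 : Set (Set Ω)) (ρ : Set Ω → Set Λ) : Prop :=
  ∀ E ∈ 𝓕, ∃ F ∈ 𝓕, F ⊆ E ∧ ∀ K : Set Ω, K.Finite → ρ F \ ρ (F \ K) ∈ idealOf 𝓕 ρ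

theorem Set.Finite.exists_subset_preimage_Iio {α : Type*} (f : α → ℕ) {K : Set α}
    (hK : K.Finite) : ∃ n, K ⊆ f ⁻¹' Iio n := by
  obtain ⟨N, hN⟩ := (hK.image f).bddAbove
  exact ⟨N + 1, fun x hx => Nat.lt_succ_of_le (hN (mem_image_of_mem f hx))⟩

section PartitionRegular

variable {Ω Λ : Type*} {𝓕 : Set (Set Ω)} {ρ : Set Ω → Set Λ}

theorem mem_idealOf_of_subset {X Y : Set Λ} (hXY : X ⊆ Y) (hY : Y ∈ idealOf 𝓕 ρ) :
    X ∈ idealOf 𝓕 ρ :=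
  fun F hF hFX => hY F hF (hFX.trans hXY)

namespace IsPartReg

theorem rho_diff_subset (h : IsPartReg 𝓕 ρ) {F K : Set Ω} (hF : F ∈ 𝓕) (hK : K.Finite) :
    ρ (F \ K) ⊆ ρ F :=
  h.mono _ (h.diff_mem F hF K hK) _ hF sdiff_subset

theorem rho_diff_anti (h : IsPartReg 𝓕 ρ) {F K K' : Set Ω} (hF : F ∈ 𝓕) (hK : K.Finite)
    (hK' : K'.Finite) (hKK' : K ⊆ K') : ρ (F \ K') ⊆ ρ (F \ K) :=
  h.mono _ (h.diff_mem F hF K' hK') _ (h.diff_mem F hF K hK) (sdiff_subset_sdiff_right hKK')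

/-- Exhaust `Ω` by finite sets `Kₙ` and apply `P⁻` to `Aₙ = B ∩ ρ(F ∖ Kₙ)`: small accretions of
`F` make each `Aₙ ∖ Aₙ₊₁ ⊆ ρ(F) ∖ ρ(F ∖ Kₙ₊₁)` small, and every finite set lies in some `Kₙ`. -/
theorem exists_tails_subset_of_smallAccretions [Countable Ω] (h : IsPartReg 𝓕 ρ)
    (hp : PminusProp 𝓕 ρ) {F : Set Ω} (hF : F ∈ 𝓕)
    (hFsmall : ∀ K : Set Ω, K.Finite → ρ F \ ρ (F \ K) ∈ idealOf 𝓕 ρ) {B : Set Λ}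
    (hB : B ∉ idealOf 𝓕 ρ) (hBF : B ⊆ ρ F) :
    ∃ G ∈ 𝓕, ρ G ⊆ B ∧
      ∀ K : Set Ω, K.Finite → ∃ L : Set Ω, L.Finite ∧ ρ (G \ L) ⊆ ρ (F \ K) := by
  obtain ⟨f, hf⟩ := Countable.exists_injective_nat Ω
  set K : ℕ → Set Ω := fun n => f ⁻¹' Iio n
  have hKfin (n : ℕ) : (K n).Finite := (finite_Iio n).preimage hf.injOn
  have hKmono : Monotone K := fun _ _ hmn => preimage_mono (Iio_subset_Iio hmn)
  set A : ℕ → Set Λ := fun n => B ∩ ρ (F \ K n)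
  have hA0 : A 0 = B := by simpa [A, K] using hBF
  have hAanti (n : ℕ) : A (n + 1) ⊆ A n :=
    inter_subset_inter_right _ (h.rho_diff_anti hF (hKfin n) (hKfin (n + 1)) (hKmono n.le_succ))
  have hAdiff (n : ℕ) : A n \ A (n + 1) ∈ idealOf 𝓕 ρ := by
    refine mem_idealOf_of_subset ?_ (hFsmall _ (hKfin (n + 1)))
    rintro x ⟨⟨hxB, hxρ⟩, hxA⟩
    exact ⟨h.rho_diff_subset hF (hKfin n) hxρ, fun hx => hxA ⟨hxB, hx⟩⟩
  obtain ⟨G, hG, hGB, hGtails⟩ := hp A hAanti (hA0 ▸ hB) hAdiff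
  refine ⟨G, hG, hA0 ▸ hGB, fun K' hK' => ?_⟩
  obtain ⟨n, hn⟩ := hK'.exists_subset_preimage_Iio f
  obtain ⟨L, hL, hGL⟩ := hGtails n
  exact ⟨L, hL, fun x hx => h.rho_diff_anti hF hK' (hKfin n) hn (hGL hx).2⟩

end IsPartReg

end PartitionRegular

theorem stmt_7_general {Ω Λ : Type*} [Countable Ω] (𝓕 : Set (Set Ω)) (ρ : Set Ω → Set Λ)
    (h : IsPartReg 𝓕 ρ) (hp : PminusProp 𝓕 ρ) (hs : HasSmallAccretions 𝓕 ρ) :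
    S2Prop 𝓕 ρ := by
  intro E hE
  obtain ⟨F, hF, hFE, hFsmall⟩ := hs E hE
  exact ⟨F, hF, hFE, fun B hB hBF =>
    h.exists_tails_subset_of_smallAccretions hp hF hFsmall hB hBF⟩

/-- if a partition regular function (on a countably infinite `Ω`) satisfies
`P⁻` and has small accretions, then it satisfies `(S₂)`. -/
theorem stmt_7 {Ω Λ : Type*} [Countable Ω] [Infinite Ω] (𝓕 : Set (Set Ω)) (ρ : Set Ω → Set Λ)
    (h : IsPartReg 𝓕 ρ) (hp : PminusProp 𝓕 ρ) (hs : HasSmallAccretions 𝓕 ρ) :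
    S2Prop 𝓕 ρ :=
  stmt_7_general 𝓕 ρ h hp hs
end

section
/- If ρ is a partition regular function such that the ordinal space ω+1 (with the order topology) does not belong to FinBW(ρ), then ρ does not satisfy P⁻(Λ): there is a partition of Λ into I_ρ-sets witnessing the failure. -/
open Set Filter

/-- `f` restricted to `ρ(F)` ρ-converges to `x`. -/
def RhoConvergesTo {Ω Λ X : Type*} [TopologicalSpace X] (ρ : Set Ω → Set Λ)
    (f : Λ → X) (F : Set Ω) (x : X) : Prop :=
  ∀ U ∈ nhds x, ∃ K : Set Ω, K.Finite ∧ f '' ρ (F \ K) ⊆ U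

/-- if the ordinal space `ω + 1` (realized as `ℕ∞` with the order topology)
is not in `FinBW(ρ)`, then `ρ` fails `P⁻(Λ)` (partition form). -/
theorem stmt_8 {Ω Λ : Type*} (𝓕 : Set (Set Ω)) (ρ : Set Ω → Set Λ)
    (h : IsPartReg 𝓕 ρ)
    (hne : ∃ f : Λ → ℕ∞, ∀ F ∈ 𝓕, ∀ x : ℕ∞, ¬ RhoConvergesTo ρ f F x) :
    ¬ (∀ A : ℕ → Set Λ, (∀ n, A n ∈ idealOf 𝓕 ρ) →
        (∀ m n, m ≠ n → Disjoint (A m) (A n)) → (⋃ n, A n) = Set.univ →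
        ∃ F ∈ 𝓕, ∀ n, ∃ K : Set Ω, K.Finite ∧ ρ (F \ K) ∩ A n = ∅) := by
  intro H
  obtain ⟨f, hf⟩ := hne
  classical
  set g : ℕ → ℕ∞ := fun n => Nat.casesOn n ⊤ (fun k => (k : ℕ∞)) with hgdef
  have hg0 : g 0 = ⊤ := rfl
  have hgs : ∀ k : ℕ, g (k + 1) = (k : ℕ∞) := fun _ => rfl
  set A : ℕ → Set Λ := fun n => f ⁻¹' {g n} with hA
  -- each A n is in the ideal
  have hAI : ∀ n, A n ∈ idealOf 𝓕 ρ := by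
    intro n F hF hsub
    apply hf F hF (g n)
    intro U hU
    refine ⟨∅, Set.finite_empty, ?_⟩
    rintro x ⟨a, ha, rfl⟩
    rw [Set.diff_empty] at ha
    have : f a = g n := hsub ha
    rw [this]
    exact mem_of_mem_nhds hU
  -- g is injective
  have hginj : Function.Injective g := by
    intro m n hmn
    match m, n with
    | 0, 0 => rfl
    | 0, n+1 => exact absurd hmn (by simp [hg0, hgs])
    | m+1, 0 => exact absurd hmn (by simp [hg0, hgs])
    | m+1, n+1 => rw [hgs, hgs, Nat.cast_inj] at hmn; exact congrArg _ hmn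
  have hdisj : ∀ m n, m ≠ n → Disjoint (A m) (A n) := by
    intro m n hmn
    rw [Set.disjoint_left]
    intro a ham han
    exact hmn (hginj (ham.symm.trans han))
  have hcover : (⋃ n, A n) = Set.univ := by
    ext a
    simp only [Set.mem_iUnion, Set.mem_univ, iff_true, hA, Set.mem_preimage,
      Set.mem_singleton_iff]
    induction (f a) using ENat.recTopCoe with
    | top => exact ⟨0, rfl⟩
    | coe k => exact ⟨k + 1, (hgs k).symm⟩
  obtain ⟨F, hF, hK⟩ := H A hAI hdisj hcover
  choose Kf hKfin hKempty using hK
  -- f restricted to ρ(F) converges to ⊤ : contradiction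
  apply hf F hF ⊤
  intro U hU
  obtain ⟨b, hblt, hbU⟩ := (nhds_top_basis (α := ℕ∞)).mem_iff.mp hU
  obtain ⟨m, rfl⟩ : ∃ m : ℕ, b = (m : ℕ∞) :=
    Option.ne_none_iff_exists'.mp (WithTop.lt_top_iff_ne_top.mp hblt)
  refine ⟨⋃ i ∈ Finset.range (m + 1), Kf (i + 1), ?_, ?_⟩
  · exact Set.Finite.biUnion (Finset.range (m + 1)).finite_toSet
      (fun i _ => hKfin (i + 1))
  · rintro x ⟨a, ha, rfl⟩
    cases hfa : f a using ENat.recTopCoe with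
    | top => exact mem_of_mem_nhds hU
    | coe k =>
      rcases le_or_gt (k : ℕ∞) (m : ℕ∞) with hk | hk
      · -- contradiction: a ∈ A (k+1) but ρ(F\K) avoids A (k+1)
        exfalso
        have hkm : k ∈ Finset.range (m + 1) := by
          rw [Finset.mem_range, Nat.lt_succ_iff]
          exact_mod_cast hk
        have hsubK : Kf (k + 1) ⊆ ⋃ i ∈ Finset.range (m + 1), Kf (i + 1) :=
          Set.subset_biUnion_of_mem (u := fun i => Kf (i + 1)) hkm
        have h1 : F \ (⋃ i ∈ Finset.range (m + 1), Kf (i + 1)) ∈ 𝓕 :=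
          h.diff_mem F hF _ (Set.Finite.biUnion (Finset.range (m + 1)).finite_toSet
            (fun i _ => hKfin (i + 1)))
        have h2 : F \ Kf (k + 1) ∈ 𝓕 := h.diff_mem F hF _ (hKfin (k + 1))
        have h3 : ρ (F \ (⋃ i ∈ Finset.range (m + 1), Kf (i + 1))) ⊆ ρ (F \ Kf (k + 1)) :=
          h.mono _ h1 _ h2 (Set.diff_subset_diff_right hsubK)
        have haA : a ∈ A (k + 1) := by
          simp only [hA, Set.mem_preimage, Set.mem_singleton_iff, hgs, hfa]
        have : a ∈ ρ (F \ Kf (k + 1)) ∩ A (k + 1) := ⟨h3 ha, haA⟩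
        rw [hKempty (k + 1)] at this
        exact this
      · exact hbU hk
end

section
/- An infinite Hausdorff space is boring (i.e., sequentially compact and such that some finite set F ⊆ X has the property that every one-to-one convergent sequence in X converges to a point of F) if and only if it is homeomorphic to a topological disjoint union of finitely many one-point compactifications of infinite discrete spaces. -/
/-!
Being boring amounts to being sequentially compact with finitely many non-isolated points: the
limit of an injective sequence is never isolated, and a non-isolated point outside the finite set
`F` has an infinite neighbourhood disjoint from a neighbourhood of `F`, which would contain an
injective sequence converging into `F`.

Given the non-isolated points `xᵢ` (there are some, as `X` is infinite), disjoint open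
neighbourhoods yield `p : X → Fin n` with `p xᵢ = i` whose fibres are neighbourhoods of the `xᵢ`.
Then `Dᵢ = p⁻¹{i} \ {xᵢ}` is infinite and discrete, and every neighbourhood of `xᵢ` contains
all but finitely many points of `Dᵢ`: an injective sequence of excluded points would converge to
some `xⱼ`, hence eventually lie in the fibre of `j`, forcing `j = i`, and then in the
neighbourhood. So `Σ i, OnePoint Dᵢ → X`, `∞ ↦ xᵢ`, is a continuous bijection from a compact
space onto a Hausdorff space.
-/

open Set Filter

universe u

/-- The one-point compactification of a set considered as a discrete space. -/
def OnePointDiscrete (D : Type u) : Type u := OnePoint D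

noncomputable instance (D : Type u) : TopologicalSpace (OnePointDiscrete D) :=
  letI : TopologicalSpace D := ⊥
  inferInstanceAs (TopologicalSpace (OnePoint D))

/-- A (Hausdorff) space is boring: sequentially compact, and some finite set `F`
contains the limit of every injective convergent sequence. -/
def IsBoring (X : Type u) [TopologicalSpace X] : Prop :=
  SeqCompactSpace X ∧ ∃ F : Set X, F.Finite ∧
    ∀ x : ℕ → X, Function.Injective x → ∀ l : X,
      Filter.Tendsto x Filter.atTop (nhds l) → l ∈ F

open Function Topology

theorem exists_strictMono_const_or_injective {α : Type*} (u : ℕ → α) :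
    ∃ φ : ℕ → ℕ, StrictMono φ ∧ ((∀ n, u (φ n) = u (φ 0)) ∨ Injective (u ∘ φ)) := by
  obtain ⟨g, hconst | hinj⟩ := exists_increasing_or_nonincreasing_subseq (· = ·) u
  · refine ⟨g, g.strictMono, Or.inl fun n => ?_⟩
    rcases n.eq_zero_or_pos with rfl | hn
    · rfl
    · exact (hconst 0 n hn).symm
  · exact ⟨g, g.strictMono, Or.inr (Injective.of_lt_imp_ne hinj)⟩

def nonIsolatedPoints (X : Type*) [TopologicalSpace X] : Set X :=
  {x | ¬IsOpen ({x} : Set X)}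

section NonIsolated

variable {X : Type*} [TopologicalSpace X]

theorem mem_nonIsolatedPoints_of_tendsto_injective {u : ℕ → X} (hu : Injective u) {l : X}
    (hl : Tendsto u atTop (𝓝 l)) : l ∈ nonIsolatedPoints X := fun hopen => by
  obtain ⟨N, hN⟩ := eventually_atTop.1 (hl (hopen.mem_nhds rfl))
  exact N.succ_ne_self (hu ((hN _ N.le_succ).trans (hN N le_rfl).symm))

theorem infinite_of_mem_nhds_of_mem_nonIsolatedPoints [T1Space X] {x : X}
    (hx : x ∈ nonIsolatedPoints X) {s : Set X} (hs : s ∈ 𝓝 x) : s.Infinite :=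
  fun hfin => hx (isOpen_singleton_of_finite_mem_nhds x hs hfin)

theorem Homeomorph.preimage_nonIsolatedPoints {Y : Type*} [TopologicalSpace Y] (h : X ≃ₜ Y) :
    h ⁻¹' nonIsolatedPoints Y = nonIsolatedPoints X := by
  ext x
  simp only [mem_preimage, nonIsolatedPoints, mem_ofPred_eq, ← image_singleton, h.isOpen_image]

theorem Set.Infinite.exists_injective_tendsto [SeqCompactSpace X] {S : Set X} (hS : S.Infinite) :
    ∃ (u : ℕ → X) (l : X), Injective u ∧ (∀ n, u n ∈ S) ∧ Tendsto u atTop (𝓝 l) := by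
  let e : ℕ ↪ S := hS.natEmbedding S
  obtain ⟨l, φ, hφ, hl⟩ := SeqCompactSpace.tendsto_subseq fun n => (e n : X)
  exact ⟨_, l, (Subtype.val_injective.comp e.injective).comp hφ.injective, fun n => (e _).2, hl⟩

theorem nonIsolatedPoints_subset_of_forall_tendsto_injective [T2Space X] [SeqCompactSpace X]
    {F : Set X} (hF : F.Finite)
    (hlim : ∀ u : ℕ → X, Injective u → ∀ l, Tendsto u atTop (𝓝 l) → l ∈ F) :
    nonIsolatedPoints X ⊆ F := by
  intro x hx
  by_contra hxF
  obtain ⟨V, U, hV, hU, hxV, hFU, hVU⟩ := SeparatedNhds.of_isCompact_isCompact isCompact_singleton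
    hF.isCompact (disjoint_singleton_left.2 hxF)
  have hVinf := infinite_of_mem_nhds_of_mem_nonIsolatedPoints hx (hV.mem_nhds (hxV rfl))
  obtain ⟨u, l, hu, huV, hl⟩ := hVinf.exists_injective_tendsto
  obtain ⟨n, hn⟩ := (hl.eventually_mem (hU.mem_nhds (hFU (hlim u hu l hl)))).exists
  exact hVU.ne_of_mem (huV n) hn rfl

end NonIsolated

theorem isBoring_iff {X : Type u} [TopologicalSpace X] [T2Space X] :
    IsBoring X ↔ SeqCompactSpace X ∧ (nonIsolatedPoints X).Finite :=
  ⟨fun ⟨hX, _, hF, hlim⟩ =>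
    ⟨hX, hF.subset (nonIsolatedPoints_subset_of_forall_tendsto_injective hF hlim)⟩,
  fun ⟨hX, hfin⟩ =>
    ⟨hX, _, hfin, fun _ hu _ hl => mem_nonIsolatedPoints_of_tendsto_injective hu hl⟩⟩

namespace OnePoint

variable {X : Type*} [TopologicalSpace X] [DiscreteTopology X]

theorem cofinite_le_nhds_infty : cofinite ≤ 𝓝 (∞ : OnePoint X) := by
  refine le_nhds_infty.2 fun s _ hs => mem_cofinite.2 <|
    (hs.finite_of_discrete.image (↑)).subset fun z hz => ?_
  induction z using OnePoint.rec with
  | infty => exact absurd (Or.inr rfl) hz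
  | coe x => exact mem_image_of_mem _ (by_contra fun hx => hz (Or.inl (mem_image_of_mem _ hx)))

theorem tendsto_nhds_infty_of_injective {u : ℕ → OnePoint X} (hu : Injective u) :
    Tendsto u atTop (𝓝 ∞) :=
  Nat.cofinite_eq_atTop ▸ hu.tendsto_cofinite.mono_right cofinite_le_nhds_infty

instance seqCompactSpace : SeqCompactSpace (OnePoint X) where
  isSeqCompact_univ {u} _ := by
    obtain ⟨φ, hφ, hconst | hinj⟩ := exists_strictMono_const_or_injective u
    · exact ⟨u (φ 0), mem_univ _, φ, hφ, tendsto_const_nhds.congr fun n => (hconst n).symm⟩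
    · exact ⟨∞, mem_univ _, φ, hφ, tendsto_nhds_infty_of_injective hinj⟩

end OnePoint

namespace OnePointDiscrete

variable {D : Type u}

instance : CompactSpace (OnePointDiscrete D) :=
  let _ : TopologicalSpace D := ⊥
  inferInstanceAs (CompactSpace (OnePoint D))

instance : SeqCompactSpace (OnePointDiscrete D) :=
  let _ : TopologicalSpace D := ⊥
  have : DiscreteTopology D := ⟨rfl⟩
  inferInstanceAs (SeqCompactSpace (OnePoint D))

theorem isOpen_singleton_coe (d : D) :
    IsOpen {(show OnePointDiscrete D from (d : OnePoint D))} := by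
  let _ : TopologicalSpace D := ⊥
  have : DiscreteTopology D := ⟨rfl⟩
  exact image_singleton (f := ((↑) : D → OnePoint D)) ▸
    OnePoint.isOpenMap_coe _ (isOpen_discrete {d})

theorem continuous_iff {Y : Type*} [TopologicalSpace Y] (f : OnePointDiscrete D → Y) :
    Continuous f ↔ Tendsto (fun d : D => f (d : OnePoint D)) cofinite (𝓝 (f OnePoint.infty)) := by
  let _ : TopologicalSpace D := ⊥
  have : DiscreteTopology D := ⟨rfl⟩
  exact OnePoint.continuous_iff_from_discrete f

end OnePointDiscrete

instance Sigma.seqCompactSpace {ι : Type*} [Finite ι] {Z : ι → Type*}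
    [∀ i, TopologicalSpace (Z i)] [∀ i, SeqCompactSpace (Z i)] : SeqCompactSpace (Σ i, Z i) where
  isSeqCompact_univ {u} _ := by
    obtain ⟨i, hi⟩ := Finite.exists_infinite_fiber fun n => (u n).1
    have hfreq : ∃ᶠ n in atTop, u n ∈ range (Sigma.mk i) := by
      rw [range_sigmaMk]
      exact Nat.frequently_atTop_iff_infinite.2 (infinite_coe_iff.1 hi)
    obtain ⟨a, -, φ, hφ, hl⟩ :=
      (IsSeqCompact.range continuous_sigmaMk.seqContinuous).subseq_of_frequently_in hfreq
    exact ⟨a, mem_univ _, φ, hφ, hl⟩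

theorem Homeomorph.seqCompactSpace {X Y : Type*} [TopologicalSpace X] [TopologicalSpace Y]
    [SeqCompactSpace Y] (h : X ≃ₜ Y) : SeqCompactSpace X :=
  isSeqCompact_univ_iff.1 <| h.symm.range_coe ▸ IsSeqCompact.range h.symm.continuous.seqContinuous

theorem nonIsolatedPoints_sigma_onePointDiscrete_subset {ι : Type*} {D : ι → Type u} :
    nonIsolatedPoints (Σ i, OnePointDiscrete (D i)) ⊆ range fun i => ⟨i, OnePoint.infty⟩ := by
  rintro ⟨i, z⟩ hz
  induction z using OnePoint.rec with
  | infty => exact ⟨i, rfl⟩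
  | coe d =>
    have := isOpenMap_sigmaMk (σ := fun i => OnePointDiscrete (D i)) _
      (OnePointDiscrete.isOpen_singleton_coe d)
    rw [image_singleton] at this
    exact absurd this hz

theorem exists_leftInverse_fiber_mem_nhds {X : Type*} [TopologicalSpace X] [T2Space X] {n : ℕ}
    [NeZero n] {ι : Fin n → X} (hι : Injective ι) :
    ∃ p : X → Fin n, LeftInverse p ι ∧ ∀ i, p ⁻¹' {i} ∈ 𝓝 (ι i) := by
  classical
  obtain ⟨U, hU, hdisj⟩ := (finite_range ι).t2_separation
  let p : X → Fin n := fun x => if h : ∃ i, x ∈ U (ι i) then h.choose else 0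
  have hp : ∀ i, ∀ x ∈ U (ι i), p x = i := fun i x hx => by
    have h : ∃ i, x ∈ U (ι i) := ⟨i, hx⟩
    simp only [p, dif_pos h]
    exact hι <| hdisj.elim (mem_range_self _) (mem_range_self _)
      (not_disjoint_iff.2 ⟨x, h.choose_spec, hx⟩)
  exact ⟨p, fun i => hp i _ (hU _).1,
    fun i => mem_of_superset ((hU _).2.mem_nhds (hU _).1) (hp i)⟩

theorem nonempty_homeomorph_sigma_of_leftInverse {X : Type u} [TopologicalSpace X] [T2Space X]
    {n : ℕ} (ι : Fin n → X) (p : X → Fin n) (hpι : LeftInverse p ι)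
    (hfin : ∀ i, ∀ U ∈ 𝓝 (ι i), {x | p x = i ∧ x ∉ U}.Finite) :
    Nonempty (X ≃ₜ Σ i, OnePointDiscrete {x // p x = i ∧ x ≠ ι i}) := by
  let g : (Σ i, OnePointDiscrete {x // p x = i ∧ x ≠ ι i}) → X :=
    fun z => OnePoint.elim z.2 (ι z.1) Subtype.val
  have hpg : ∀ z, p (g z) = z.1 := by
    rintro ⟨i, z⟩
    induction z using OnePoint.rec with
    | infty => exact hpι i
    | coe d => exact d.2.1
  have hinj : Injective g := by
    rintro ⟨i, z⟩ ⟨j, w⟩ h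
    obtain rfl : i = j := (hpg ⟨i, z⟩).symm.trans (h ▸ hpg ⟨j, w⟩)
    congr 1
    induction z using OnePoint.rec with
    | infty =>
      induction w using OnePoint.rec with
      | infty => rfl
      | coe d => exact absurd h.symm d.2.2
    | coe d =>
      induction w using OnePoint.rec with
      | infty => exact absurd h d.2.2
      | coe e => exact congrArg _ (Subtype.ext h)
  have hsurj : Surjective g := fun x => by
    by_cases hx : x = ι (p x)
    · exact ⟨⟨p x, OnePoint.infty⟩, hx.symm⟩
    · exact ⟨⟨p x, OnePoint.some ⟨x, rfl, hx⟩⟩, rfl⟩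
  have hcont : Continuous g := continuous_sigma fun i =>
    (OnePointDiscrete.continuous_iff _).2 fun U hU => mem_cofinite.2 <|
      ((hfin i U hU).preimage Subtype.val_injective.injOn).subset fun d hd => ⟨d.2.1, hd⟩
  exact ⟨(hcont.homeoOfEquivCompactToT2 (f := Equiv.ofBijective g ⟨hinj, hsurj⟩)).symm⟩

theorem exists_homeomorph_sigma_onePointDiscrete {X : Type u} [TopologicalSpace X] [T2Space X]
    [Infinite X] [SeqCompactSpace X] (hN : (nonIsolatedPoints X).Finite) :
    ∃ (n : ℕ) (D : Fin n → Type u), (∀ i, Infinite (D i)) ∧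
      Nonempty (X ≃ₜ Σ i, OnePointDiscrete (D i)) := by
  obtain ⟨n, ι, hι, hrange⟩ := hN.fin_param
  have : NeZero n := by
    obtain ⟨u, l, hu, -, hl⟩ := (infinite_univ (α := X)).exists_injective_tendsto
    obtain ⟨i, -⟩ : l ∈ range ι := hrange ▸ mem_nonIsolatedPoints_of_tendsto_injective hu hl
    exact ⟨i.pos.ne'⟩
  obtain ⟨p, hpι, hp⟩ := exists_leftInverse_fiber_mem_nhds hι
  have hfin : ∀ i, ∀ U ∈ 𝓝 (ι i), {x | p x = i ∧ x ∉ U}.Finite := by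
    intro i U hU
    by_contra hinf
    obtain ⟨u, l, hu, huS, hl⟩ := Set.Infinite.exists_injective_tendsto hinf
    obtain ⟨j, rfl⟩ : l ∈ range ι := hrange ▸ mem_nonIsolatedPoints_of_tendsto_injective hu hl
    obtain ⟨k, hk⟩ := (hl.eventually_mem (hp j)).exists
    obtain rfl : i = j := (huS k).1.symm.trans hk
    obtain ⟨k, hk⟩ := (hl.eventually_mem hU).exists
    exact (huS k).2 hk
  refine ⟨n, _, fun i => ?_, nonempty_homeomorph_sigma_of_leftInverse ι p hpι hfin⟩
  have hιN : ι i ∈ nonIsolatedPoints X := hrange ▸ mem_range_self i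
  exact ((infinite_of_mem_nhds_of_mem_nonIsolatedPoints hιN (hp i)).sdiff
    (finite_singleton (ι i))).to_subtype

/-- an infinite Hausdorff space is boring iff it is homeomorphic to a
topological disjoint union of finitely many one-point compactifications of infinite
discrete spaces. -/
theorem stmt_14 {X : Type u} [TopologicalSpace X] [T2Space X] [Infinite X] :
    IsBoring X ↔ ∃ (n : ℕ) (D : Fin n → Type u), (∀ i, Infinite (D i)) ∧
      Nonempty (X ≃ₜ (Σ i, OnePointDiscrete (D i))) := by
  rw [isBoring_iff]
  constructor
  · rintro ⟨_, hN⟩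
    exact exists_homeomorph_sigma_onePointDiscrete hN
  · rintro ⟨n, D, -, ⟨h⟩⟩
    refine ⟨h.seqCompactSpace, ?_⟩
    rw [← h.preimage_nonIsolatedPoints]
    exact ((finite_range _).subset nonIsolatedPoints_sigma_onePointDiscrete_subset).preimage
      h.injective.injOn
end

section
/- Let I be an ideal on ω and let ρ^(I) be defined from an almost disjoint family {A_α : α < 𝔠} on ω, an enumeration I⁺ = {B_α : α < 𝔠}, and a partition {Pₙ : n ∈ ω} of ω into I-sets, by ρ^(I)(A_α ∖ K) = B_α ∖ ⋃{Pₙ : n < max(K ∩ A_α)}. Then ρ^(I) is a partition regular function on the family {A ∖ K : A ∈ 𝒜, K finite}, and I_{ρ^(I)} = I. -/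
open Set Filter

/-- The domain `{A_α ∖ K : α, K finite}` of `ρ^(I)`. -/
def adDomain {ι : Type*} (A : ι → Set ℕ) : Set (Set ℕ) :=
  {S | ∃ (α : ι) (K : Set ℕ), K.Finite ∧ S = A α \ K}

/-!
`ρ(A_α ∖ K)` is `B_α` minus finitely many `I`-sets, hence `I`-positive; conversely every
`I`-positive set is a value `ρ(A_α) = B_α`. These two facts give (R) and `I_ρ = I`.
(M) holds because `A_α ∖ K ⊆ A_β ∖ K'` forces `α = β` by almost disjointness, and then
`K' ∩ A_α ⊆ K ∩ A_α`. For (S), a point of `P_n` is removed from `ρ(A_α ∖ K)` once `K`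
contains a point of `A_α` above `n`.
-/

namespace IsIdeal

variable {X : Type*} {I : Set (Set X)}

theorem mem_of_subset (hI : IsIdeal I) {C D : Set X} (hCD : C ⊆ D) (hD : D ∈ I) : C ∈ I :=
  hI.2.2.2.1 C D hCD hD

theorem union_mem (hI : IsIdeal I) {C D : Set X} (hC : C ∈ I) (hD : D ∈ I) : C ∪ D ∈ I :=
  hI.2.2.2.2 C D hC hD

theorem biUnion_mem {κ : Type*} (hI : IsIdeal I) {s : Set κ} (hs : s.Finite) {f : κ → Set X}
    (hf : ∀ i ∈ s, f i ∈ I) : (⋃ i ∈ s, f i) ∈ I := by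
  induction s, hs using Set.Finite.induction_on with
  | empty => simpa using hI.1
  | @insert a s _ _ ih =>
    rw [biUnion_insert]
    exact hI.union_mem (hf a (mem_insert a s)) (ih fun i hi ↦ hf i (mem_insert_of_mem a hi))

theorem not_mem_or_not_mem_of_union (hI : IsIdeal I) {C D : Set X} (h : C ∪ D ∉ I) :
    C ∉ I ∨ D ∉ I := by
  by_contra! hCD
  exact h (hI.union_mem hCD.1 hCD.2)

end IsIdeal

/-- The defining identity of the paper's `ρ^(I)`. -/
def IsRhoOf {ι : Type*} (A B : ι → Set ℕ) (P : ℕ → Set ℕ) (ρ : Set ℕ → Set ℕ) : Prop :=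
  ∀ (α : ι) (K : Set ℕ), K.Finite →
    ρ (A α \ K) = B α \ ⋃ n ∈ {m : ℕ | m < sSup (K ∩ A α)}, P n

section RhoOf

variable {ι : Type*} {A B : ι → Set ℕ} {P : ℕ → Set ℕ} {ρ : Set ℕ → Set ℕ}

theorem self_mem_adDomain (α : ι) : A α ∈ adDomain A :=
  ⟨α, ∅, finite_empty, sdiff_empty.symm⟩

theorem IsRhoOf.apply_self (hρ : IsRhoOf A B P ρ) (α : ι) : ρ (A α) = B α := by
  simpa using hρ α ∅ finite_empty

theorem IsRhoOf.apply_not_mem {I : Set (Set ℕ)} (hI : IsIdeal I) (hB : ∀ α, B α ∉ I)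
    (hP : ∀ n, P n ∈ I) (hρ : IsRhoOf A B P ρ) (α : ι) {K : Set ℕ} (hK : K.Finite) :
    ρ (A α \ K) ∉ I := by
  rw [hρ α K hK]
  intro h
  have hU : (⋃ n ∈ {m : ℕ | m < sSup (K ∩ A α)}, P n) ∈ I :=
    hI.biUnion_mem (finite_Iio _) fun n _ ↦ hP n
  exact hB α (hI.mem_of_subset (subset_sdiff_union _ _) (hI.union_mem h hU))

theorem IsRhoOf.exists_apply_eq {I : Set (Set ℕ)} (hB : ∀ C, C ∉ I → ∃ α, B α = C)
    (hρ : IsRhoOf A B P ρ) {C : Set ℕ} (hC : C ∉ I) : ∃ S ∈ adDomain A, ρ S = C := by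
  obtain ⟨α, rfl⟩ := hB C hC
  exact ⟨A α, self_mem_adDomain α, hρ.apply_self α⟩

theorem IsRhoOf.apply_anti (hρ : IsRhoOf A B P ρ) (α : ι) {K K' : Set ℕ} (hK : K.Finite)
    (hK' : K'.Finite) (h : K' ∩ A α ⊆ K ∩ A α) : ρ (A α \ K) ⊆ ρ (A α \ K') := by
  rw [hρ α K hK, hρ α K' hK']
  refine sdiff_subset_sdiff_right (biUnion_subset_biUnion_left fun m hm ↦ ?_)
  exact lt_of_lt_of_le hm (csSup_le_csSup' (hK.inter_of_left _).bddAbove h)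

theorem IsRhoOf.disjoint_apply (hρ : IsRhoOf A B P ρ) (α : ι) {K : Set ℕ} (hK : K.Finite)
    {k n : ℕ} (hk : k ∈ K ∩ A α) (hn : n < k) : Disjoint (ρ (A α \ K)) (P n) := by
  rw [hρ α K hK]
  refine disjoint_left.2 fun a ha haP ↦ ha.2 (mem_biUnion ?_ haP)
  exact lt_of_lt_of_le hn (le_csSup (hK.inter_of_left _).bddAbove hk)

theorem index_eq_of_diff_subset_diff (hA : ∀ α, (A α).Infinite)
    (hAD : ∀ α β, α ≠ β → (A α ∩ A β).Finite) {α β : ι} {K K' : Set ℕ} (hK : K.Finite)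
    (h : A α \ K ⊆ A β \ K') : α = β := by
  by_contra hne
  exact (hA α).sdiff hK ((hAD α β hne).subset fun x hx ↦ ⟨hx.1, (h hx).1⟩)

theorem IsRhoOf.apply_mono (hA : ∀ α, (A α).Infinite)
    (hAD : ∀ α β, α ≠ β → (A α ∩ A β).Finite) (hρ : IsRhoOf A B P ρ) :
    ∀ E ∈ adDomain A, ∀ F ∈ adDomain A, E ⊆ F → ρ E ⊆ ρ F := by
  rintro _ ⟨α, K, hK, rfl⟩ _ ⟨β, K', hK', rfl⟩ hEF
  obtain rfl := index_eq_of_diff_subset_diff hA hAD hK hEF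
  refine hρ.apply_anti α hK hK' fun x ⟨hxK', hxA⟩ ↦ ⟨?_, hxA⟩
  by_contra hxK
  exact (hEF ⟨hxA, hxK⟩).2 hxK'

theorem IsRhoOf.exists_not_mem_apply_diff (hA : ∀ α, (A α).Infinite)
    (hP : (⋃ n, P n) = univ) (hρ : IsRhoOf A B P ρ) (α : ι) {K : Set ℕ} (hK : K.Finite)
    (a : ℕ) : ∃ K' : Set ℕ, K'.Finite ∧ a ∉ ρ ((A α \ K) \ K') := by
  obtain ⟨n, haP⟩ := mem_iUnion.1 (hP ▸ mem_univ a)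
  obtain ⟨k, hkA, hnk⟩ := (hA α).exists_gt n
  refine ⟨{k}, finite_singleton k, fun ha ↦ ?_⟩
  rw [sdiff_sdiff] at ha
  exact disjoint_left.1 (hρ.disjoint_apply α (hK.union (finite_singleton k))
    ⟨mem_union_right K rfl, hkA⟩ hnk) ha haP

end RhoOf

theorem stmt_15_general {ι : Type*} (I : Set (Set ℕ)) (hI : IsIdeal I)
    (A : ι → Set ℕ) (hAinf : ∀ α, (A α).Infinite)
    (hAD : ∀ α β, α ≠ β → (A α ∩ A β).Finite)
    (B : ι → Set ℕ) (hBpos : ∀ α, B α ∉ I)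
    (hBsurj : ∀ C : Set ℕ, C ∉ I → ∃ α, B α = C)
    (P : ℕ → Set ℕ) (hPmem : ∀ n, P n ∈ I)
    (hPcover : (⋃ n, P n) = Set.univ)
    (ρ : Set ℕ → Set ℕ)
    (hρ : ∀ (α : ι) (K : Set ℕ), K.Finite →
      ρ (A α \ K) = B α \ ⋃ n ∈ {m : ℕ | m < sSup (K ∩ A α)}, P n) :
    IsPartReg (adDomain A) ρ ∧
      ∀ C : Set ℕ, C ∈ I ↔ ∀ S ∈ adDomain A, ¬ ρ S ⊆ C := by
  have hρI : IsRhoOf A B P ρ := hρ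
  have positive : ∀ S ∈ adDomain A, ρ S ∉ I := by
    rintro _ ⟨α, K, hK, rfl⟩
    exact hρI.apply_not_mem hI hBpos hPmem α hK
  refine ⟨⟨?_, ?_, ?_, ?_, hρI.apply_mono hAinf hAD, ?_, ?_⟩, fun C ↦ ⟨?_, ?_⟩⟩
  · obtain ⟨S, hS, -⟩ := hρI.exists_apply_eq hBsurj hI.2.1
    exact ⟨S, hS⟩
  · rintro _ ⟨α, K, hK, rfl⟩
    exact (hAinf α).sdiff hK
  · rintro _ ⟨α, K, hK, rfl⟩ K' hK'
    exact ⟨α, K ∪ K', hK.union hK', sdiff_sdiff⟩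
  · exact fun S hS hfin ↦ positive S hS (hI.2.2.1 _ hfin)
  · intro F hF C D hCD
    rcases hI.not_mem_or_not_mem_of_union (hCD ▸ positive F hF) with hC | hD
    · obtain ⟨E, hE, hEC⟩ := hρI.exists_apply_eq hBsurj hC
      exact ⟨E, hE, Or.inl hEC.subset⟩
    · obtain ⟨E, hE, hED⟩ := hρI.exists_apply_eq hBsurj hD
      exact ⟨E, hE, Or.inr hED.subset⟩
  · rintro _ ⟨α, K, hK, rfl⟩
    exact ⟨_, ⟨α, K, hK, rfl⟩, subset_rfl, fun a _ ↦
      hρI.exists_not_mem_apply_diff hAinf hPcover α hK a⟩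
  · exact fun hC S hS hSC ↦ positive S hS (hI.mem_of_subset hSC hC)
  · intro h
    by_contra hC
    obtain ⟨S, hS, hSC⟩ := hρI.exists_apply_eq hBsurj hC
    exact h S hS hSC.subset

/-- `ρ^(I)`, defined from an almost disjoint family `{A_α}`, an enumeration
`{B_α}` of `I⁺` and a partition `{Pₙ}` of `ω` into `I`-sets by
`ρ^(I)(A_α ∖ K) = B_α ∖ ⋃ {Pₙ : n < max (K ∩ A_α)}` (with `max ∅ = 0`, realized by `sSup`),
is a partition regular function and `I_{ρ^(I)} = I`. -/
theorem stmt_15 {ι : Type*} (I : Set (Set ℕ)) (hI : IsIdeal I)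
    (A : ι → Set ℕ) (hAinf : ∀ α, (A α).Infinite)
    (hAD : ∀ α β, α ≠ β → (A α ∩ A β).Finite) (hAinj : Function.Injective A)
    (B : ι → Set ℕ) (hBpos : ∀ α, B α ∉ I)
    (hBsurj : ∀ C : Set ℕ, C ∉ I → ∃ α, B α = C)
    (P : ℕ → Set ℕ) (hPmem : ∀ n, P n ∈ I)
    (hPdisj : ∀ m n, m ≠ n → Disjoint (P m) (P n)) (hPcover : (⋃ n, P n) = Set.univ)
    (ρ : Set ℕ → Set ℕ)
    (hρ : ∀ (α : ι) (K : Set ℕ), K.Finite →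
      ρ (A α \ K) = B α \ ⋃ n ∈ {m : ℕ | m < sSup (K ∩ A α)}, P n) :
    IsPartReg (adDomain A) ρ ∧
      ∀ C : Set ℕ, C ∈ I ↔ ∀ S ∈ adDomain A, ¬ ρ S ⊆ C :=
  stmt_15_general I hI A hAinf hAD B hBpos hBsurj P hPmem hPcover ρ hρ
end

section
/- If I is an ideal on ω with the P⁻ property, then the partition regular function ρ^(I) has the P⁻ property: for any decreasing sequence (Cₙ) of subsets of ω with C₀ ∉ I and Cₙ ∖ Cₙ₊₁ ∈ I, there is an element F of the domain of ρ^(I) with ρ^(I)(F) ⊆ C₀ such that for each n there is a finite K with ρ^(I)(F∖K) ⊆ Cₙ. -/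
open Set Filter

/-- if `I ∈ P⁻` then the partition regular function `ρ^(I)` satisfies `P⁻`. -/
theorem stmt_17 {ι : Type*} (I : Set (Set ℕ)) (hI : IsIdeal I)
    (hIP : ∀ C : ℕ → Set ℕ, (∀ n, C (n + 1) ⊆ C n) → C 0 ∉ I →
      (∀ n, C n \ C (n + 1) ∈ I) →
      ∃ B' : Set ℕ, B' ∉ I ∧ B' ⊆ C 0 ∧ ∀ n, (B' \ C n).Finite)
    (A : ι → Set ℕ) (hAinf : ∀ α, (A α).Infinite)
    (hAD : ∀ α β, α ≠ β → (A α ∩ A β).Finite) (hAinj : Function.Injective A)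
    (B : ι → Set ℕ) (hBpos : ∀ α, B α ∉ I)
    (hBsurj : ∀ C : Set ℕ, C ∉ I → ∃ α, B α = C)
    (P : ℕ → Set ℕ) (hPmem : ∀ n, P n ∈ I)
    (hPdisj : ∀ m n, m ≠ n → Disjoint (P m) (P n)) (hPcover : (⋃ n, P n) = Set.univ)
    (ρ : Set ℕ → Set ℕ)
    (hρ : ∀ (α : ι) (K : Set ℕ), K.Finite →
      ρ (A α \ K) = B α \ ⋃ n ∈ {m : ℕ | m < sSup (K ∩ A α)}, P n) :
    ∀ C : ℕ → Set ℕ, (∀ n, C (n + 1) ⊆ C n) → C 0 ∉ I →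
      (∀ n, C n \ C (n + 1) ∈ I) →
      ∃ S ∈ adDomain A, ρ S ⊆ C 0 ∧ ∀ n, ∃ K : Set ℕ, K.Finite ∧ ρ (S \ K) ⊆ C n := by
  intro C hCdec hC0 hCdiff
  obtain ⟨B', hB'I, hB'C0, hB'fin⟩ := hIP C hCdec hC0 hCdiff
  obtain ⟨α, hα⟩ := hBsurj B' hB'I
  refine ⟨A α \ ∅, ⟨α, ∅, finite_empty, rfl⟩, ?_, ?_⟩
  · rw [hρ α ∅ finite_empty, hα]
    have h0 : sSup ((∅ : Set ℕ) ∩ A α) = 0 := by simp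
    rw [h0]
    intro x hx
    exact hB'C0 hx.1
  · intro n
    have hg : ∀ x : ℕ, ∃ m, x ∈ P m := by
      intro x
      have : x ∈ ⋃ m, P m := hPcover ▸ Set.mem_univ x
      simpa using this
    choose g hgmem using hg
    have hfin : (g '' (B' \ C n)).Finite := (hB'fin n).image g
    obtain ⟨N0, hN0⟩ := hfin.bddAbove
    obtain ⟨k, hkA, hkN⟩ := (hAinf α).exists_gt N0
    refine ⟨{k}, Set.finite_singleton k, ?_⟩
    have hset : (A α \ ∅) \ {k} = A α \ {k} := by simp
    rw [hset, hρ α {k} (Set.finite_singleton k), hα]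
    have hik : ({k} : Set ℕ) ∩ A α = {k} := by
      ext x; simp (config := {contextual := true}) [hkA]
    rw [hik, csSup_singleton]
    intro x hx
    by_contra hxC
    have hxB : x ∈ B' \ C n := ⟨hx.1, hxC⟩
    have hgx : g x ≤ N0 := hN0 ⟨x, hxB, rfl⟩
    exact hx.2 (Set.mem_biUnion (show g x ∈ {m : ℕ | m < k} from lt_of_le_of_lt hgx hkN) (hgmem x))
end

section
/- Let I be an ideal on ω and consider the product ideal FIN ⊗ I on ω × ω with the partition Pₙ = {n} × ω. The function ρ^(FIN⊗I) satisfies P⁻, even though the ideal FIN ⊗ I itself fails P⁻. Consequently, the implication 'I ∈ P⁻ implies ρ^(I) ∈ P⁻' cannot be reversed. -/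
open Set Filter

/-- The ideal `FIN ⊗ I` on `ω × ω`. -/
def FinOtimes (I : Set (Set ℕ)) : Set (Set (ℕ × ℕ)) :=
  {A | {n : ℕ | {k : ℕ | (n, k) ∈ A} ∉ I}.Finite}

/-- for the partition `Pₙ = {n} × ω`, the function `ρ^(FIN⊗I)` satisfies `P⁻`,
while the ideal `FIN ⊗ I` itself fails `P⁻`; hence `I ∈ P⁻ ⇒ ρ^(I) ∈ P⁻` cannot be
reversed. -/
theorem stmt_18 {ι : Type*} (I : Set (Set ℕ)) (hI : IsIdeal I)
    (A : ι → Set ℕ) (hAinf : ∀ α, (A α).Infinite)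
    (hAD : ∀ α β, α ≠ β → (A α ∩ A β).Finite) (hAinj : Function.Injective A)
    (B : ι → Set (ℕ × ℕ)) (hBpos : ∀ α, B α ∉ FinOtimes I)
    (hBsurj : ∀ C : Set (ℕ × ℕ), C ∉ FinOtimes I → ∃ α, B α = C)
    (ρ : Set ℕ → Set (ℕ × ℕ))
    (hρ : ∀ (α : ι) (K : Set ℕ), K.Finite →
      ρ (A α \ K) = B α \ {p : ℕ × ℕ | p.1 < sSup (K ∩ A α)}) :
    (∀ C : ℕ → Set (ℕ × ℕ), (∀ n, C (n + 1) ⊆ C n) → C 0 ∉ FinOtimes I →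
        (∀ n, C n \ C (n + 1) ∈ FinOtimes I) →
        ∃ S ∈ adDomain A, ρ S ⊆ C 0 ∧
          ∀ n, ∃ K : Set ℕ, K.Finite ∧ ρ (S \ K) ⊆ C n) ∧
      ¬ (∀ C : ℕ → Set (ℕ × ℕ), (∀ n, C (n + 1) ⊆ C n) → C 0 ∉ FinOtimes I →
          (∀ n, C n \ C (n + 1) ∈ FinOtimes I) →
          ∃ D : Set (ℕ × ℕ), D ∉ FinOtimes I ∧ D ⊆ C 0 ∧ ∀ n, (D \ C n).Finite) := by
  obtain ⟨hI0, hIuniv, hIfin, hImono, hIun⟩ := hI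
  constructor
  · intro C hdec hC0 hdiff
    have hCanti : Antitone C := antitone_nat_of_succ_le hdec
    set G : ℕ → Set ℕ := fun n => {m | {k | (m, k) ∈ C n \ C (n + 1)} ∉ I} with hGdef
    have hG : ∀ n, (G n).Finite := fun n => hdiff n
    set b : ℕ → ℕ := fun n => sSup (G n) + 1 with hbdef
    have hGb : ∀ n x, x ∈ G n → x < b n := by
      intro n x hx
      have := le_csSup (hG n).bddAbove hx
      show x < sSup (G n) + 1
      omega
    set m : ℕ → ℕ := fun n => Nat.rec 0 (fun n' ih => max (ih + 1) (b n')) n with hmdef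
    have hm0 : m 0 = 0 := rfl
    have hms : ∀ n, m (n + 1) = max (m n + 1) (b n) := fun n => rfl
    have hmsm : StrictMono m := by
      apply strictMono_nat_of_lt_succ
      intro n
      rw [hms n]
      omega
    set D : Set (ℕ × ℕ) := {p | ∀ j, m j ≤ p.1 → p ∈ C j} with hDdef
    have hD0 : D ⊆ C 0 := fun p hp => hp 0 (by simp [hm0])
    have hDCn : ∀ n (p : ℕ × ℕ), p ∈ D → m n ≤ p.1 → p ∈ C n := fun n p hp h => hp n h
    have hDsec : ∀ m0 : ℕ, {k | (m0, k) ∈ C 0} ∉ I → {k | (m0, k) ∈ D} ∉ I := by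
      intro m0 h0
      have hTbdd : BddAbove {n | m n ≤ m0} := by
        refine ⟨m0, fun n hn => ?_⟩
        exact le_trans (hmsm.le_apply) hn
      have hT0 : (0 : ℕ) ∈ {n | m n ≤ m0} := by simp [hm0]
      set N := sSup {n | m n ≤ m0} with hNdef
      have hNmem : N ∈ {n | m n ≤ m0} := Nat.sSup_mem ⟨0, hT0⟩ hTbdd
      have hNle : m N ≤ m0 := hNmem
      have hle : ∀ n, m n ≤ m0 → n ≤ N := fun n hn => le_csSup hTbdd hn
      have key : ∀ n, n ≤ N → {k | (m0, k) ∈ C n} ∉ I := by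
        intro n
        induction n with
        | zero => intro _; exact h0
        | succ j ih =>
          intro hjN
          have hj := ih (Nat.le_of_succ_le hjN)
          have hmnot : m0 ∉ G j := by
            intro hmem
            have h1 : m0 < b j := hGb j m0 hmem
            have h2 : b j ≤ m (j + 1) := by rw [hms j]; omega
            have h3 : m (j + 1) ≤ m N := hmsm.monotone hjN
            omega
          have hsecdiff : {k | (m0, k) ∈ C j \ C (j + 1)} ∈ I := by
            by_contra h
            exact hmnot h
          intro hmem
          apply hj
          apply hImono _ _ _ (hIun _ _ hmem hsecdiff)
          intro k hk
          by_cases hk2 : (m0, k) ∈ C (j + 1)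
          · exact Or.inl hk2
          · exact Or.inr ⟨hk, hk2⟩
      have hCN : {k | (m0, k) ∈ C N} ∉ I := key N le_rfl
      intro hmem
      apply hCN
      apply hImono _ _ _ hmem
      intro k hk
      intro j hj
      exact hCanti (hle j hj) hk
    have hDpos : D ∉ FinOtimes I := by
      intro h
      apply hC0
      exact Set.Finite.subset h (fun m0 hc => hDsec m0 hc)
    obtain ⟨α, hα⟩ := hBsurj D hDpos
    refine ⟨A α \ ∅, ⟨α, ∅, Set.finite_empty, rfl⟩, ?_, ?_⟩
    · have := hρ α ∅ Set.finite_empty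
      rw [this, hα]
      have : sSup (∅ ∩ A α) = 0 := by simp
      rw [this]
      intro p hp
      exact hD0 hp.1
    · intro n
      obtain ⟨k, hkA, hkgt⟩ := (hAinf α).exists_gt (m n)
      refine ⟨{k}, Set.finite_singleton k, ?_⟩
      have heq : (A α \ ∅) \ {k} = A α \ {k} := by simp
      rw [heq, hρ α {k} (Set.finite_singleton k)]
      have hik : ({k} : Set ℕ) ∩ A α = {k} := by
        rw [Set.inter_eq_left]; simpa using hkA
      rw [hik, csSup_singleton, hα]
      rintro p ⟨hpD, hpk⟩
      simp only [Set.mem_setOf_eq, not_lt] at hpk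
      exact hpD n (by omega)
  · intro H
    obtain ⟨D, hDpos, hDsub, hDfin⟩ := H (fun n => {p | n ≤ p.1})
      (fun n p hp => by simp only [Set.mem_setOf_eq] at *; omega)
      (by
        intro h
        have hall : ∀ m1 : ℕ, m1 ∈ {n : ℕ | {k : ℕ | ((n, k) : ℕ × ℕ) ∈ (fun n => {p : ℕ × ℕ | n ≤ p.1}) 0} ∉ I} := by
          intro m1
          show {k : ℕ | (0 : ℕ) ≤ m1} ∉ I
          have : {k : ℕ | (0 : ℕ) ≤ m1} = Set.univ := by ext k; simp
          rw [this]; exact hIuniv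
        have hfin : {n : ℕ | {k : ℕ | ((n, k) : ℕ × ℕ) ∈ (fun n => {p : ℕ × ℕ | n ≤ p.1}) 0} ∉ I}.Finite := h
        rw [Set.eq_univ_of_forall hall] at hfin
        exact Set.infinite_univ hfin)
      (by
        intro n
        show Set.Finite _
        apply Set.Finite.subset (Set.finite_singleton n)
        intro m0 hm0
        simp only [Set.mem_setOf_eq] at hm0
        by_contra hne
        apply hm0
        have : {k : ℕ | ((m0, k) : ℕ × ℕ) ∈ {p : ℕ × ℕ | n ≤ p.1} \ {p : ℕ × ℕ | n + 1 ≤ p.1}} = ∅ := by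
          ext k
          simp only [Set.mem_setOf_eq, Set.mem_diff, Set.mem_empty_iff_false, iff_false]
          simp only [Set.mem_singleton_iff] at hne
          omega
        rw [this]; exact hI0)
    have hne : {m0 : ℕ | {k : ℕ | (m0, k) ∈ D} ∉ I}.Infinite := hDpos
    obtain ⟨m0, hm0⟩ := hne.nonempty
    simp only [Set.mem_setOf_eq] at hm0
    have hsecinf : {k : ℕ | (m0, k) ∈ D}.Infinite := by
      intro hfin
      exact hm0 (hIfin _ hfin)
    have himg : ((fun k => ((m0, k) : ℕ × ℕ)) '' {k | (m0, k) ∈ D}).Infinite :=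
      hsecinf.image (fun a _ b _ h => by simpa using h)
    have hsub : ((fun k => ((m0, k) : ℕ × ℕ)) '' {k | (m0, k) ∈ D}) ⊆
        D \ (fun n => {p : ℕ × ℕ | n ≤ p.1}) (m0 + 1) := by
      rintro p ⟨k, hk, rfl⟩
      refine ⟨hk, ?_⟩
      simp only [Set.mem_setOf_eq]
      omega
    exact himg (Set.Finite.subset (hDfin (m0 + 1)) hsub)
end

section
/- Suppose ρ: F → [ω]^ω is a partition regular function (with F ⊆ [ω]^ω) and g: ω → ℚ ∩ [0,1] is an injection such that g↾ρ(F) is not ρ-convergent for any F ∈ F. Then for every F ∈ F and every n ∈ ω, the image g[ρ(F ∖ [0,n])] is not in the ideal conv, i.e., it cannot be covered by finitely many convergent sequences of rationals. -/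
open Set Filter

/-- Finite Ramsey property: if `ρ F` is covered by finitely many sets, some `E ∈ 𝓕`
has `ρ E` inside one of them. -/
lemma ramsey_finite {Ω Λ : Type*} {𝓕 : Set (Set Ω)} {ρ : Set Ω → Set Λ}
    (h : IsPartReg 𝓕 ρ) :
    ∀ (k : ℕ) (A : Fin k → Set Λ) (F : Set Ω), F ∈ 𝓕 → ρ F ⊆ ⋃ i, A i →
      ∃ E ∈ 𝓕, ∃ i, ρ E ⊆ A i := by
  intro k
  induction k with
  | zero =>
    intro A F hF hsub
    obtain ⟨a, ha⟩ := (h.rho_infinite F hF).nonempty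
    obtain ⟨i, -⟩ := mem_iUnion.mp (hsub ha)
    exact absurd i.2 (by omega)
  | succ k ih =>
    intro A F hF hsub
    have heq : ρ F = (ρ F ∩ A 0) ∪ (ρ F ∩ ⋃ i : Fin k, A i.succ) := by
      apply subset_antisymm
      · intro a ha
        obtain ⟨i, hi⟩ := mem_iUnion.mp (hsub ha)
        rcases Fin.eq_zero_or_eq_succ i with h0 | ⟨j, rfl⟩
        · exact Or.inl ⟨ha, h0 ▸ hi⟩
        · exact Or.inr ⟨ha, mem_iUnion.mpr ⟨j, hi⟩⟩
      · rintro a (⟨ha, -⟩ | ⟨ha, -⟩) <;> exact ha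
    obtain ⟨E, hE, hcase⟩ := h.ramsey F hF _ _ heq
    rcases hcase with h1 | h2
    · exact ⟨E, hE, 0, h1.trans inter_subset_right⟩
    · obtain ⟨E', hE', i, hi⟩ := ih (fun i => A i.succ) E hE (h2.trans inter_subset_right)
      exact ⟨E', hE', i.succ, hi⟩

/-- if `g : ω → ℚ ∩ [0,1]` is injective and `g ↾ ρ(F)` is not ρ-convergent
for any `F ∈ 𝓕`, then for every `F ∈ 𝓕` and `n`, the image `g[ρ(F ∖ [0,n])]` cannot be
covered by finitely many sequences of rationals of `[0,1]` converging in `[0,1]`. -/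
theorem stmt_19 (𝓕 : Set (Set ℕ)) (ρ : Set ℕ → Set ℕ) (h : IsPartReg 𝓕 ρ)
    (g : ℕ → ℚ) (hg01 : ∀ n, g n ∈ Set.Icc (0 : ℚ) 1) (hginj : Function.Injective g)
    (hdiv : ∀ F ∈ 𝓕, ∀ p ∈ Set.Icc (0 : ℝ) 1,
      ¬ (∀ ε : ℝ, 0 < ε → ∃ K : Set ℕ, K.Finite ∧ ∀ a ∈ ρ (F \ K), |(g a : ℝ) - p| < ε)) :
    ∀ F ∈ 𝓕, ∀ n : ℕ,
      ¬ ∃ (k : ℕ) (s : Fin k → ℕ → ℚ),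
        (∀ i m, s i m ∈ Set.Icc (0 : ℚ) 1) ∧
        (∀ i, ∃ l ∈ Set.Icc (0 : ℝ) 1,
          Filter.Tendsto (fun m => ((s i m : ℚ) : ℝ)) Filter.atTop (nhds l)) ∧
        g '' ρ (F \ {m : ℕ | m ≤ n}) ⊆ ⋃ i, Set.range (s i) := by
  rintro F hF n ⟨k, s, hs01, hlim, hcov⟩
  -- the set F' = F \ [0,n] belongs to 𝓕
  have hIic : ({m : ℕ | m ≤ n} : Set ℕ).Finite := Set.finite_Iic n
  have hF' : F \ {m : ℕ | m ≤ n} ∈ 𝓕 := h.diff_mem F hF _ hIic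
  -- ρ(F') is covered by the preimages of the ranges
  have hsub : ρ (F \ {m : ℕ | m ≤ n}) ⊆ ⋃ i, g ⁻¹' Set.range (s i) := by
    intro a ha
    have := hcov ⟨a, ha, rfl⟩
    obtain ⟨i, hi⟩ := mem_iUnion.mp this
    exact mem_iUnion.mpr ⟨i, hi⟩
  obtain ⟨E, hE, i, hEi⟩ := ramsey_finite h k _ _ hF' hsub
  obtain ⟨l, hl, hlt⟩ := hlim i
  -- apply sparseness to E
  obtain ⟨F₀, hF₀, hF₀E, hsp⟩ := h.sparse E hE
  have hρF₀ : ρ F₀ ⊆ g ⁻¹' Set.range (s i) :=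
    (h.mono F₀ hF₀ E hE hF₀E).trans hEi
  -- choose witnessing finite sets
  choose! K hKfin hKnot using hsp
  apply hdiv F₀ hF₀ l hl
  intro ε hε
  -- all but finitely many terms of s i are ε-close to l
  obtain ⟨N, hN⟩ := (Metric.tendsto_atTop.mp hlt) ε hε
  -- the bad points
  set B : Set ℕ := {a ∈ ρ F₀ | ¬ |(g a : ℝ) - l| < ε} with hB
  have hBfin : B.Finite := by
    have hBsub : B ⊆ g ⁻¹' ((fun m => s i m) '' Set.Iio N) := by
      rintro a ⟨ha, hbad⟩
      obtain ⟨m, hm⟩ := hρF₀ ha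
      refine ⟨m, ?_, hm⟩
      by_contra hmN
      simp only [Set.mem_Iio, not_lt] at hmN
      have := hN m hmN
      rw [Real.dist_eq, hm] at this
      exact hbad this
    exact Set.Finite.preimage hginj.injOn (((Set.finite_Iio N).image _))
      |>.subset hBsub
  refine ⟨⋃ a ∈ B, K a, hBfin.biUnion (fun a ha => hKfin a ha.1), ?_⟩
  intro a ha
  have hKU : F₀ \ ⋃ b ∈ B, K b ∈ 𝓕 :=
    h.diff_mem F₀ hF₀ _ (hBfin.biUnion (fun b hb => hKfin b hb.1))
  have haF₀ : a ∈ ρ F₀ :=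
    h.mono _ hKU F₀ hF₀ diff_subset ha
  by_contra hbad
  have haB : a ∈ B := ⟨haF₀, hbad⟩
  have hKa : F₀ \ K a ∈ 𝓕 := h.diff_mem F₀ hF₀ _ (hKfin a haF₀)
  have hmono : ρ (F₀ \ ⋃ b ∈ B, K b) ⊆ ρ (F₀ \ K a) := by
    apply h.mono _ hKU _ hKa
    exact diff_subset_diff_right (subset_biUnion_of_mem haB)
  exact hKnot a haF₀ (hmono ha)
end
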